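/- arXiv:0809.2776 — 5 statements merged into one kernel-verified Lean document; each statement's English description precedes it below -/
import Mathlib

section
/- If w is a finite subword (factor) of the Kolakoski word K, then the run-length encoding of w, with its first and last entries removed, is also a subword of K. -/
/-- `K` is a Kolakoski-type word: a sequence over `{1,2}` starting with `2`
whose run-length encoding (witnessed by run-start indices `r`) equals `K` itself. -/
def IsKolakoski (K : ℕ → ℕ) : Prop :=
  (∀ i, K i = 1 ∨ K i = 2) ∧ K 0 = 2 ∧
  ∃ r : ℕ → ℕ, r 0 = 0 ∧ StrictMono r ∧
    (∀ k, ∀ i, r k ≤ i → i < r (k + 1) → K i = K (r k)) ∧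
    (∀ k, K (r k) ≠ K (r (k + 1))) ∧
    (∀ k, r (k + 1) - r k = K k)

/-- `w` is a contiguous factor (subword) of the infinite word `K`. -/
def IsFactor (K : ℕ → ℕ) (w : List ℕ) : Prop :=
  ∃ i : ℕ, w = List.ofFn (fun j : Fin w.length => K (i + (j : ℕ)))

/-- Run-length encoding of a finite word. -/
def runLengths (l : List ℕ) : List ℕ :=
  (l.splitBy (· == ·)).map List.length

/-- `w` avoids every word in `S`: no element of `S` is a contiguous factor of `w`. -/
def Avoids (S : Set (List ℕ)) (w : List ℕ) : Prop :=
  ∀ v ∈ S, ¬ v <:+: w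

/-- Number of `1`'s among the first `m` terms of `K`. -/
def onesCount (K : ℕ → ℕ) (m : ℕ) : ℕ :=
  ((Finset.range m).filter (fun i => K i = 1)).card

section Aux

open List

/- Bridge between `ofFn` factors and `range'` maps. -/
lemma aux_ofFn_eq_map_range' (f : ℕ → ℕ) (i n : ℕ) :
    List.ofFn (fun j : Fin n => f (i + (j : ℕ))) = (List.range' i n).map f := by
  apply List.ext_getElem
  · simp
  · intro j h1 h2
    simp

lemma aux_isFactor_of_eq_map_range' (K : ℕ → ℕ) (l : List ℕ) (i n : ℕ)
    (h : l = (List.range' i n).map K) : IsFactor K l := by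
  refine ⟨i, ?_⟩
  have hl : l.length = n := by rw [h]; simp
  rw [aux_ofFn_eq_map_range' K i l.length, hl, h]

/- splitBy lemmas -/

lemma aux_loop_eq_append {α : Type*} (r : α → α → Bool) (l : List α) (a : α) (g : List α)
    (gs : List (List α)) : splitBy.loop r l a g gs = gs.reverse ++ splitBy.loop r l a g [] := by
  induction l generalizing a g gs with
  | nil => simp [splitBy.loop]
  | cons b l IH =>
    simp_rw [splitBy.loop]
    split <;> rw [IH]
    conv_rhs => rw [IH]
    simp

lemma aux_loop_replicate {α : Type*} (r : α → α → Bool) (a : α) (haa : r a a = true)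
    (c : ℕ) (l : List α) (g : List α) (gs : List (List α)) :
    splitBy.loop r (List.replicate c a ++ l) a g gs =
      splitBy.loop r l a (List.replicate c a ++ g) gs := by
  induction c generalizing g with
  | zero => simp
  | succ c IH =>
    rw [List.replicate_succ, List.cons_append, splitBy.loop, haa, IH]
    rw [List.append_cons, ← List.replicate_succ', List.replicate_succ, List.cons_append]

lemma aux_splitBy_replicate_nil {α : Type*} (r : α → α → Bool) (a : α) (haa : r a a = true)
    (c : ℕ) :
    List.splitBy r (List.replicate (c + 1) a) = [List.replicate (c + 1) a] := by
  rw [List.replicate_succ, List.splitBy]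
  have := aux_loop_replicate r a haa c ([] : List α) [] []
  simp only [List.append_nil] at this
  rw [this, splitBy.loop]
  simp only [List.reverse_cons, List.reverse_replicate, List.reverse_nil, List.nil_append,
    List.cons_ne_nil, List.cons.injEq]
  rw [← List.replicate_succ', List.replicate_succ]
  simp

lemma aux_splitBy_replicate_cons {α : Type*} (r : α → α → Bool) (a b : α) (haa : r a a = true)
    (hab : r a b = false) (c : ℕ) (t : List α) :
    List.splitBy r (List.replicate (c + 1) a ++ (b :: t)) =
      List.replicate (c + 1) a :: List.splitBy r (b :: t) := by
  rw [List.replicate_succ, List.cons_append, List.splitBy,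
    aux_loop_replicate r a haa c (b :: t) [] [], splitBy.loop, hab, List.splitBy]
  rw [aux_loop_eq_append r t b [] _]
  have h : List.replicate c a ++ [a] = a :: List.replicate c a := by
    rw [← List.replicate_succ', List.replicate_succ]
  simp [h]

lemma aux_splitBy_blocks (L : List (ℕ × ℕ)) (hpos : ∀ p ∈ L, 0 < p.2)
    (hch : L.Chain' fun p q => p.1 ≠ q.1) :
    List.splitBy (· == ·) ((L.map fun p => List.replicate p.2 p.1).flatten) =
      L.map fun p => List.replicate p.2 p.1 := by
  induction L with
  | nil => rfl
  | cons p L IH =>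
    obtain ⟨a, c⟩ := p
    have hc : 0 < c := hpos (a, c) (by simp)
    obtain ⟨c', rfl⟩ : ∃ c', c = c' + 1 := ⟨c - 1, by omega⟩
    cases L with
    | nil =>
      simp only [List.map_cons, List.map_nil, List.flatten_cons, List.flatten_nil,
        List.append_nil]
      rw [aux_splitBy_replicate_nil (· == ·) a (by simp) c']
    | cons q L' =>
      obtain ⟨b, d⟩ := q
      have hd : 0 < d := hpos (b, d) (by simp)
      obtain ⟨d', rfl⟩ : ∃ d', d = d' + 1 := ⟨d - 1, by omega⟩
      have hab : a ≠ b := (List.isChain_cons_cons.1 hch).1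
      have hflat : ((((b, d' + 1) :: L').map fun p => List.replicate p.2 p.1).flatten)
          = b :: (List.replicate d' b ++ ((L'.map fun p => List.replicate p.2 p.1).flatten)) := by
        simp [List.replicate_succ]
      have IH' := IH (fun p hp => hpos p (by simp [hp])) (List.isChain_cons_cons.1 hch).2
      rw [hflat] at IH'
      simp only [List.map_cons, List.flatten_cons]
      have hsplit : List.replicate (d' + 1) b ++ ((L'.map fun p => List.replicate p.2 p.1).flatten)
          = b :: (List.replicate d' b ++ ((L'.map fun p => List.replicate p.2 p.1).flatten)) := by
        simp [List.replicate_succ]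
      rw [hsplit, aux_splitBy_replicate_cons (· == ·) a b (by simp) (by simp [hab]) c', IH']
      simp

lemma aux_runLengths_blocks (L : List (ℕ × ℕ)) (hpos : ∀ p ∈ L, 0 < p.2)
    (hch : L.Chain' fun p q => p.1 ≠ q.1) :
    runLengths ((L.map fun p => List.replicate p.2 p.1).flatten) = L.map Prod.snd := by
  rw [runLengths, aux_splitBy_blocks L hpos hch, List.map_map]
  simp [Function.comp_def]

/- The flatten decomposition of a factor into runs. -/
lemma aux_flatten_runs (K r : ℕ → ℕ) (hmono : StrictMono r)
    (hconst : ∀ k, ∀ i, r k ≤ i → i < r (k + 1) → K i = K (r k)) :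
    ∀ d a s e, r a ≤ s → s < r (a + 1) → r (a + d) < e → e ≤ r (a + d + 1) →
    (((List.range' a (d + 1)).map
        (fun k => List.replicate (min e (r (k + 1)) - max s (r k)) (K (r k)))).flatten)
      = (List.range' s (e - s)).map K := by
  intro d
  induction d with
  | zero =>
    intro a s e h1 h2 h3 h4
    simp only [Nat.add_zero] at h3 h4
    have hmin : min e (r (a + 1)) = e := by omega
    have hmax : max s (r a) = s := by omega
    rw [show (0 : ℕ) + 1 = 1 from rfl, List.range'_one, List.map_cons, List.map_nil,
      List.flatten_cons, List.flatten_nil, List.append_nil, hmin, hmax]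
    symm
    rw [List.eq_replicate_iff]
    constructor
    · simp
    · intro x hx
      simp only [List.mem_map, List.mem_range'_1] at hx
      obtain ⟨y, ⟨hy1, hy2⟩, rfl⟩ := hx
      exact hconst a y (by omega) (by omega)
  | succ d IH =>
    intro a s e h1 h2 h3 h4
    have h3' : r (a + d + 1) < e := h3
    have h4' : e ≤ r (a + d + 2) := h4
    have hr1 : r (a + 1) ≤ r (a + d + 1) := hmono.monotone (by omega)
    have hmin : min e (r (a + 1)) = r (a + 1) := by omega
    have hmax : max s (r a) = s := by omega
    rw [List.range'_succ, List.map_cons, List.flatten_cons, hmin, hmax]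
    have hcongr : (List.range' (a + 1) (d + 1)).map
        (fun k => List.replicate (min e (r (k + 1)) - max s (r k)) (K (r k)))
        = (List.range' (a + 1) (d + 1)).map
        (fun k => List.replicate (min e (r (k + 1)) - max (r (a + 1)) (r k)) (K (r k))) := by
      apply List.map_congr_left
      intro k hk
      rw [List.mem_range'_1] at hk
      have : r (a + 1) ≤ r k := hmono.monotone (by omega)
      congr 2
      omega
    have h3'' : r (a + 1 + d) < e := by
      rw [show a + 1 + d = a + d + 1 from by omega]; exact h3'
    have h4'' : e ≤ r (a + 1 + d + 1) := by
      rw [show a + 1 + d + 1 = a + d + 2 from by omega]; exact h4'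
    rw [hcongr, IH (a + 1) (r (a + 1)) e le_rfl (hmono (by omega)) h3'' h4'']
    have hrep : List.replicate (r (a + 1) - s) (K (r a)) = (List.range' s (r (a + 1) - s)).map K := by
      symm
      rw [List.eq_replicate_iff]
      constructor
      · simp
      · intro x hx
        simp only [List.mem_map, List.mem_range'_1] at hx
        obtain ⟨y, ⟨hy1, hy2⟩, rfl⟩ := hx
        exact hconst a y (by omega) (by omega)
    rw [hrep, ← List.map_append]
    congr 1
    have h5 : s + (r (a + 1) - s) = r (a + 1) := by omega
    have := List.range'_append_1 (s := s) (m := r (a + 1) - s) (n := e - r (a + 1))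
    rw [h5] at this
    rw [this]
    congr 1
    omega

end Aux

theorem kolakoski_factor_runLengths (K : ℕ → ℕ) (hK : IsKolakoski K)
    (w : List ℕ) (hw : IsFactor K w) :
    IsFactor K (((runLengths w).tail).dropLast) := by
  obtain ⟨h12, h0, r, hr0, hmono, hconst, hne, hlen⟩ := hK
  obtain ⟨i, hw⟩ := hw
  -- trivial case: w empty
  rcases Nat.eq_zero_or_pos w.length with hn | hn
  · have : w = [] := List.eq_nil_of_length_eq_zero hn
    subst this
    exact ⟨0, by simp [runLengths]⟩
  obtain ⟨n, hnw⟩ : ∃ n, n = w.length := ⟨_, rfl⟩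
  have hwr : w = (List.range' i w.length).map K := by
    conv_lhs => rw [hw]
    rw [aux_ofFn_eq_map_range']
  rw [← hnw] at hwr hn
  -- find the runs containing i and i + n - 1
  have hrk : ∀ k, k ≤ r k := fun k => hmono.le_apply
  have hexists : ∀ m : ℕ, ∃ k, r k ≤ m ∧ m < r (k + 1) := by
    intro m
    set k := Nat.findGreatest (fun k => r k ≤ m) m with hk
    have hP0 : r 0 ≤ m := by omega
    have h1 : r k ≤ m := Nat.findGreatest_spec (P := fun k => r k ≤ m) (Nat.zero_le m) hP0
    refine ⟨k, h1, ?_⟩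
    by_contra h
    push_neg at h
    have hk1m : k + 1 ≤ m := le_trans (hrk (k + 1)) h
    exact Nat.findGreatest_is_greatest (Nat.lt_succ_self k) hk1m h
  obtain ⟨a, ha1, ha2⟩ := hexists i
  obtain ⟨b, hb1, hb2⟩ := hexists (i + n - 1)
  have hab : a ≤ b := by
    by_contra h
    push_neg at h
    have : r (b + 1) ≤ r a := hmono.monotone (by omega)
    omega
  obtain ⟨d, rfl⟩ : ∃ d, b = a + d := ⟨b - a, by omega⟩
  -- the blocks
  set L : List (ℕ × ℕ) :=
    (List.range' a (d + 1)).map (fun k => (K (r k), min (i + n) (r (k + 1)) - max i (r k)))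
    with hL
  have hflat : (L.map fun p => List.replicate p.2 p.1).flatten = w := by
    rw [hL, List.map_map]
    have hcomp : ((fun p : ℕ × ℕ => List.replicate p.2 p.1) ∘
        (fun k => (K (r k), min (i + n) (r (k + 1)) - max i (r k))))
        = fun k => List.replicate (min (i + n) (r (k + 1)) - max i (r k)) (K (r k)) := rfl
    rw [hcomp, aux_flatten_runs K r hmono hconst d a i (i + n) ha1 ha2
      (by omega) (by omega)]
    rw [show i + n - i = n from by omega]
    exact hwr.symm
  have hpos : ∀ p ∈ L, 0 < p.2 := by
    intro p hp
    rw [hL, List.mem_map] at hp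
    obtain ⟨k, hk, rfl⟩ := hp
    rw [List.mem_range'_1] at hk
    have h1 : r (a + 1) ≤ r (k + 1) := hmono.monotone (by omega)
    have h2 : r k ≤ r (a + d) := hmono.monotone (by omega)
    have h3 : r k < r (k + 1) := hmono (by omega)
    show 0 < min (i + n) (r (k + 1)) - max i (r k)
    omega
  have hch : L.Chain' fun p q => p.1 ≠ q.1 := by
    rw [hL]
    change List.IsChain _ _
    rw [List.isChain_map, List.isChain_iff_getElem]
    intro j hj
    simp only [List.get_eq_getElem, List.getElem_range', one_mul]
    exact fun hEq => hne (a + j) hEq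
  have hrl : runLengths w = (List.range' a (d + 1)).map
      (fun k => min (i + n) (r (k + 1)) - max i (r k)) := by
    rw [← hflat, aux_runLengths_blocks L hpos hch, hL, List.map_map]
    rfl
  -- tail
  have htail : (runLengths w).tail = (List.range' (a + 1) d).map
      (fun k => min (i + n) (r (k + 1)) - max i (r k)) := by
    rw [hrl, List.range'_succ, List.map_cons, List.tail_cons]
  rcases Nat.eq_zero_or_pos d with hd0 | hdpos
  · rw [htail, hd0]
    exact ⟨0, by simp⟩
  obtain ⟨d', rfl⟩ : ∃ d', d = d' + 1 := ⟨d - 1, by omega⟩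
  have hconcat : List.range' (a + 1) (d' + 1) = List.range' (a + 1) d' ++ [a + 1 + d'] := by
    have := List.range'_concat (step := 1) (s := a + 1) (n := d')
    simpa using this
  have hdrop : ((runLengths w).tail).dropLast = (List.range' (a + 1) d').map
      (fun k => min (i + n) (r (k + 1)) - max i (r k)) := by
    rw [htail, hconcat, List.map_append, List.map_cons, List.map_nil,
      List.dropLast_concat]
  have hfinal : ((runLengths w).tail).dropLast = (List.range' (a + 1) d').map K := by
    rw [hdrop]
    apply List.map_congr_left
    intro k hk
    rw [List.mem_range'_1] at hk
    have h1 : r (a + 1) ≤ r k := hmono.monotone (by omega)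
    have h2 : r (k + 1) ≤ r (a + (d' + 1)) := hmono.monotone (by omega)
    have h3 : min (i + n) (r (k + 1)) = r (k + 1) := by omega
    have h4 : max i (r k) = r k := by omega
    rw [h3, h4, hlen k]
  exact aux_isFactor_of_eq_map_range' K _ (a + 1) d' hfinal
end

section
/- The Kolakoski word K avoids the subwords 12121 and 21212. -/
theorem kolakoski_avoids_12121_21212 (K : ℕ → ℕ) (hK : IsKolakoski K) :
    ¬ IsFactor K [1, 2, 1, 2, 1] ∧ ¬ IsFactor K [2, 1, 2, 1, 2] := by
  obtain ⟨h12, h0, r, hr0, hmono, hconst, hdiff, hlen⟩ := hK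
  -- every position lies in a run
  have hexists : ∀ i, ∃ k, r k ≤ i ∧ i < r (k + 1) := by
    intro i
    induction i with
    | zero => exact ⟨0, by omega, by have := hmono (show 0 < 0 + 1 by omega); omega⟩
    | succ n ih =>
      obtain ⟨k, hk1, hk2⟩ := ih
      by_cases h : n + 1 < r (k + 1)
      · exact ⟨k, by omega, h⟩
      · refine ⟨k + 1, by omega, ?_⟩
        have := hmono (show k + 1 < k + 1 + 1 by omega)
        omega
  -- the run containing a position is unique
  have huniq : ∀ i k k', r k ≤ i → i < r (k + 1) → r k' ≤ i → i < r (k' + 1) → k = k' := by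
    intro i k k' h1 h2 h3 h4
    rcases lt_trichotomy k k' with h | h | h
    · have := hmono.monotone (show k + 1 ≤ k' by omega); omega
    · exact h
    · have := hmono.monotone (show k' + 1 ≤ k by omega); omega
  -- a change of letter marks a run boundary
  have hB : ∀ i, K i ≠ K (i + 1) → ∃ k, r k ≤ i ∧ r (k + 1) = i + 1 := by
    intro i hne
    obtain ⟨k, hk1, hk2⟩ := hexists i
    by_cases h : i + 1 < r (k + 1)
    · exact absurd ((hconst k i hk1 hk2).trans (hconst k (i + 1) (by omega) h).symm) hne
    · exact ⟨k, hk1, by omega⟩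
  -- no three consecutive equal letters
  have hC : ∀ i, ¬(K i = K (i + 1) ∧ K (i + 1) = K (i + 2)) := by
    rintro i ⟨e1, e2⟩
    obtain ⟨k, hk1, hk2⟩ := hexists i
    have hKi : K i = K (r k) := hconst k i hk1 hk2
    have h1 : i + 1 < r (k + 1) := by
      by_contra h
      have hrk1 : r (k + 1) = i + 1 := by omega
      exact hdiff k (by rw [← hKi, e1, hrk1])
    have h2 : i + 2 < r (k + 1) := by
      by_contra h
      have hrk1 : r (k + 1) = i + 2 := by omega
      have := hconst k (i + 1) (by omega) h1
      exact hdiff k (by rw [← this, e2, hrk1])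
    have := hlen k
    have := h12 k
    omega
  -- main: no alternating factor of length 5
  have main : ∀ i, K i ≠ K (i + 1) → K (i + 1) ≠ K (i + 2) → K (i + 2) ≠ K (i + 3) →
      K (i + 3) ≠ K (i + 4) → False := by
    intro i n0 n1 n2 n3
    obtain ⟨k0, hk0a, hk0b⟩ := hB i n0
    obtain ⟨k1, hk1a, hk1b⟩ := hB (i + 1) n1
    obtain ⟨k2, hk2a, hk2b⟩ := hB (i + 2) n2
    obtain ⟨k3, hk3a, hk3b⟩ := hB (i + 3) n3
    have s0 : k1 = k0 + 1 := by
      refine huniq (i + 1) k1 (k0 + 1) hk1a (by omega) (by omega) ?_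
      have := hmono (show k0 + 1 < k0 + 1 + 1 by omega); omega
    have s1 : k2 = k1 + 1 := by
      refine huniq (i + 2) k2 (k1 + 1) hk2a (by omega) (by omega) ?_
      have := hmono (show k1 + 1 < k1 + 1 + 1 by omega); omega
    have s2 : k3 = k2 + 1 := by
      refine huniq (i + 3) k3 (k2 + 1) hk3a (by omega) (by omega) ?_
      have := hmono (show k2 + 1 < k2 + 1 + 1 by omega); omega
    have v1 : r k1 = i + 1 := by rw [s0]; omega
    have v2 : r k2 = i + 2 := by rw [s1]; omega
    have v3 : r k3 = i + 3 := by rw [s2]; omega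
    have l1 : K k1 = 1 := by have := hlen k1; omega
    have l2 : K k2 = 1 := by have := hlen k2; omega
    have l3 : K k3 = 1 := by have := hlen k3; omega
    have a1 : K (k1 + 1) = 1 := s1 ▸ l2
    have a2 : K (k1 + 2) = 1 := by
      have hk : k3 = k1 + 2 := by omega
      exact hk ▸ l3
    exact hC k1 ⟨by rw [l1, a1], by rw [a1, a2]⟩
  constructor <;> rintro ⟨i, hw⟩ <;>
    norm_num [List.ofFn_succ, List.ofFn_zero, Fin.val_succ, Fin.val_zero] at hw <;>
    obtain ⟨e0, e1, e2, e3, e4⟩ := hw <;>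
    refine main i ?_ ?_ ?_ ?_ <;> omega
end

section
/- The Kolakoski word K avoids the subwords 112211 and 221122. -/
lemma cover {r : ℕ → ℕ} (h0 : r 0 = 0) (hm : StrictMono r) (n : ℕ) :
    ∃ k, r k ≤ n ∧ n < r (k + 1) := by
  classical
  have hex : ∃ m, n < r m := ⟨n + 1, lt_of_lt_of_le (Nat.lt_succ_self n) hm.le_apply⟩
  have hml := Nat.find_spec hex
  have hm0 : Nat.find hex ≠ 0 := by intro h; rw [h, h0] at hml; omega
  obtain ⟨k, hk⟩ := Nat.exists_eq_succ_of_ne_zero hm0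
  refine ⟨k, le_of_not_gt (Nat.find_min hex (by omega)), ?_⟩
  rw [show k + 1 = Nat.succ k from rfl, ← hk]; exact hml

lemma no_pattern (K : ℕ → ℕ) (hK : IsKolakoski K) (a b : ℕ) (hab : a ≠ b) (i : ℕ)
    (h0 : K i = a) (h1 : K (i+1) = a) (h2 : K (i+2) = b) (h3 : K (i+3) = b)
    (h4 : K (i+4) = a) (h5 : K (i+5) = a) : False := by
  obtain ⟨hval, _, r, hr0, hmono, hrun, hdiff, hlen⟩ := hK
  have hle : ∀ k, r (k + 1) - r k ≤ 2 := by
    intro k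
    rw [hlen k]
    rcases hval k with h | h <;> omega
  obtain ⟨k, hk1, hk2⟩ := cover hr0 hmono (i + 1)
  -- boundary at i+2
  have hb2 : r (k + 1) = i + 2 := by
    by_contra hne
    have h : i + 2 < r (k + 1) := by omega
    have e1 := hrun k (i+1) hk1 hk2
    have e2 := hrun k (i+2) (by omega) h
    rw [h1] at e1; rw [h2] at e2
    exact hab (e1.trans e2.symm)
  have hrk : r k = i := by
    have hd := hle k
    have hge : i ≤ r k := by omega
    rcases Nat.eq_or_lt_of_le hge with h | h
    · omega
    · have hrki : r k = i + 1 := by omega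
      have hk0 : k ≠ 0 := by intro h'; rw [h', hr0] at hrki; omega
      obtain ⟨m, hm⟩ := Nat.exists_eq_succ_of_ne_zero hk0
      have hrki' : r (m + 1) = i + 1 := by
        rw [show m + 1 = Nat.succ m from rfl, ← hm]; exact hrki
      have hrm : r m < r (m + 1) := hmono (Nat.lt_succ_self m)
      have hi : K i = K (r m) := hrun m i (by omega) (by omega)
      have hdm := hdiff m
      rw [hrki', h1, ← hi, h0] at hdm
      exact (hdm rfl).elim
  have hKk : K k = 2 := by rw [← hlen k, hb2, hrk]; omega
  -- boundary at i+4
  have hb4 : r (k + 2) = i + 4 := by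
    have hd : r (k + 2) - r (k + 1) ≤ 2 := hle (k + 1)
    have hlt : r (k + 1) < r (k + 2) := hmono (Nat.lt_succ_self _)
    by_contra hne
    have hrk2 : r (k + 2) = i + 3 := by omega
    have hdm : K (r (k + 1)) ≠ K (r (k + 2)) := hdiff (k + 1)
    rw [hb2, hrk2, h2, h3] at hdm
    exact hdm rfl
  have hKk1 : K (k + 1) = 2 := by
    have := hlen (k + 1)
    rw [show k + 1 + 1 = k + 2 from rfl, hb4, hb2] at this
    omega
  -- boundary at i+6
  have hb6 : r (k + 3) = i + 6 := by
    have hd : r (k + 3) - r (k + 2) ≤ 2 := hle (k + 2)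
    have hlt : r (k + 2) < r (k + 3) := hmono (Nat.lt_succ_self _)
    by_contra hne
    have hrk3 : r (k + 3) = i + 5 := by omega
    have hdm : K (r (k + 2)) ≠ K (r (k + 3)) := hdiff (k + 2)
    rw [hb4, hrk3, h4, h5] at hdm
    exact hdm rfl
  have hKk2 : K (k + 2) = 2 := by
    have := hlen (k + 2)
    rw [show k + 2 + 1 = k + 3 from rfl, hb6, hb4] at this
    omega
  -- three consecutive 2's at k, k+1, k+2 : impossible
  obtain ⟨m, hm1, hm2⟩ := cover hr0 hmono k
  have hd := hle m
  have hKrm : K (r m) = 2 := by rw [← hrun m k hm1 hm2, hKk]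
  have hdm := hdiff m
  rw [hKrm] at hdm
  have hor : r (m + 1) = k + 1 ∨ r (m + 1) = k + 2 := by omega
  rcases hor with h | h <;> rw [h] at hdm
  · exact hdm hKk1.symm
  · exact hdm hKk2.symm

theorem kolakoski_avoids_112211_221122 (K : ℕ → ℕ) (hK : IsKolakoski K) :
    ¬ IsFactor K [1, 1, 2, 2, 1, 1] ∧ ¬ IsFactor K [2, 2, 1, 1, 2, 2] := by
  constructor
  · rintro ⟨i, h⟩
    simp [List.ofFn_succ, List.cons.injEq] at h
    obtain ⟨h0, h1, h2, h3, h4, h5⟩ := h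
    exact no_pattern K hK 1 2 (by norm_num) i h0.symm h1.symm h2.symm h3.symm h4.symm h5.symm
  · rintro ⟨i, h⟩
    simp [List.ofFn_succ, List.cons.injEq] at h
    obtain ⟨h0, h1, h2, h3, h4, h5⟩ := h
    exact no_pattern K hK 2 1 (by norm_num) i h0.symm h1.symm h2.symm h3.symm h4.symm h5.symm
end

section
/- Let W be the set of finite words over {1,2} avoiding 111 and 222, and define weight(w) = x₁^{|w|₁} x₂^{|w|₂} t^{|w|}. Then the formal power series Σ_{w∈W} weight(w) equals (x₁²t² + x₁t + 1)(x₂²t² + x₂t + 1) / (1 − x₁²x₂²t⁴ − x₁²x₂t³ − x₁x₂²t³ − x₁x₂t²). -/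
attribute [local instance] Classical.propDecidable

namespace GJaux
noncomputable section

abbrev R := MvPolynomial (Fin 2) ℚ
def X1 : R := MvPolynomial.X 0
def X2 : R := MvPolynomial.X 1
def S : Set (List ℕ) := {[1,1,1],[2,2,2]}
def wt (w : List ℕ) : R := X1 ^ w.count 1 * X2 ^ w.count 2
def L : ℕ → Finset (List ℕ)
  | 0 => {([] : List ℕ)}
  | n+1 => (L n).image (1 :: ·) ∪ (L n).image (2 :: ·)
def E (n : ℕ) : R := ∑ w ∈ L n, if Avoids S w then wt w else 0
def Q (p : List ℕ) (n : ℕ) : R := ∑ w ∈ L n, if Avoids S w ∧ p <+: w then wt w else 0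

lemma sum_L_succ (G : List ℕ → R) (n : ℕ) :
    ∑ w ∈ L (n+1), G w = (∑ w ∈ L n, G (1 :: w)) + ∑ w ∈ L n, G (2 :: w) := by
  rw [show L (n+1) = (L n).image (1 :: ·) ∪ (L n).image (2 :: ·) from rfl,
    Finset.sum_union, Finset.sum_image (by intros; simp_all), Finset.sum_image (by intros; simp_all)]
  rw [Finset.disjoint_left]
  rintro a ha hb
  simp only [Finset.mem_image] at ha hb
  obtain ⟨u, -, rfl⟩ := ha
  obtain ⟨v, -, h⟩ := hb
  simp at h

lemma avoids_iff (w : List ℕ) : Avoids S w ↔ ¬ [1,1,1] <:+: w ∧ ¬ [2,2,2] <:+: w := by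
  simp [Avoids, S, or_imp, forall_and]

lemma avoids_cons_one (w : List ℕ) :
    Avoids S (1 :: w) ↔ Avoids S w ∧ ¬ [1,1] <+: w := by
  simp only [avoids_iff, List.infix_cons_iff, List.cons_prefix_cons]
  tauto

lemma avoids_cons_two (w : List ℕ) :
    Avoids S (2 :: w) ↔ Avoids S w ∧ ¬ [2,2] <+: w := by
  simp only [avoids_iff, List.infix_cons_iff, List.cons_prefix_cons]
  tauto

lemma wt_cons_one (w : List ℕ) : wt (1 :: w) = X1 * wt w := by
  simp [wt, List.count_cons]; ring
lemma wt_cons_two (w : List ℕ) : wt (2 :: w) = X2 * wt w := by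
  simp [wt, List.count_cons]; ring


lemma stepE
 (n : ℕ) : E (n+1) = X1 * (E n - Q [1,1] n) + X2 * (E n - Q [2,2] n) := by
  rw [E, sum_L_succ]
  rw [E, Q, Q, ← Finset.sum_sub_distrib, ← Finset.sum_sub_distrib, Finset.mul_sum, Finset.mul_sum]
  congr 1
  · apply Finset.sum_congr rfl; intro w _
    simp only [avoids_cons_one, wt_cons_one]
    by_cases hA : Avoids S w <;> by_cases hP : [1,1] <+: w <;> simp [hA, hP, mul_sub] <;> ring
  · apply Finset.sum_congr rfl; intro w _
    simp only [avoids_cons_two, wt_cons_two]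
    by_cases hA : Avoids S w <;> by_cases hP : [2,2] <+: w <;> simp [hA, hP, mul_sub] <;> ring

lemma stepQ1 (n : ℕ) : Q [1] (n+1) = X1 * (E n - Q [1,1] n) := by
  rw [Q, sum_L_succ, E, Q, ← Finset.sum_sub_distrib, Finset.mul_sum]
  rw [show (∑ w ∈ L n, if Avoids S (2::w) ∧ [1] <+: (2::w) then wt (2::w) else 0) = 0 from
    Finset.sum_eq_zero (fun w _ => by rw [if_neg]; simp [List.cons_prefix_cons])]
  rw [add_zero]
  apply Finset.sum_congr rfl; intro w _
  simp only [avoids_cons_one, wt_cons_one, List.cons_prefix_cons, List.nil_prefix, and_true]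
  by_cases hA : Avoids S w <;> by_cases hP : [1,1] <+: w <;> simp [hA, hP, mul_sub] <;> ring

lemma stepQ2 (n : ℕ) : Q [2] (n+1) = X2 * (E n - Q [2,2] n) := by
  rw [Q, sum_L_succ, E, Q, ← Finset.sum_sub_distrib, Finset.mul_sum]
  rw [show (∑ w ∈ L n, if Avoids S (1::w) ∧ [2] <+: (1::w) then wt (1::w) else 0) = 0 from
    Finset.sum_eq_zero (fun w _ => by rw [if_neg]; simp [List.cons_prefix_cons])]
  rw [zero_add]
  apply Finset.sum_congr rfl; intro w _
  simp only [avoids_cons_two, wt_cons_two, List.cons_prefix_cons, List.nil_prefix, and_true]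
  by_cases hA : Avoids S w <;> by_cases hP : [2,2] <+: w <;> simp [hA, hP, mul_sub] <;> ring

lemma stepQ11 (n : ℕ) : Q [1,1] (n+1) = X1 * (Q [1] n - Q [1,1] n) := by
  rw [Q, sum_L_succ, Q, Q, ← Finset.sum_sub_distrib, Finset.mul_sum]
  rw [show (∑ w ∈ L n, if Avoids S (2::w) ∧ [1,1] <+: (2::w) then wt (2::w) else 0) = 0 from
    Finset.sum_eq_zero (fun w _ => by rw [if_neg]; simp [List.cons_prefix_cons])]
  rw [add_zero]
  apply Finset.sum_congr rfl; intro w _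
  have hp : [1,1] <+: w → [1] <+: w := fun h => List.IsPrefix.trans ⟨[1], rfl⟩ h
  simp only [avoids_cons_one, wt_cons_one, List.cons_prefix_cons, true_and]
  by_cases hA : Avoids S w <;> by_cases h1 : [1] <+: w <;> by_cases h11 : [1,1] <+: w <;> first | exact absurd (hp h11) h1 | (simp [hA, h1, h11, mul_sub] <;> ring)

lemma stepQ22 (n : ℕ) : Q [2,2] (n+1) = X2 * (Q [2] n - Q [2,2] n) := by
  rw [Q, sum_L_succ, Q, Q, ← Finset.sum_sub_distrib, Finset.mul_sum]
  rw [show (∑ w ∈ L n, if Avoids S (1::w) ∧ [2,2] <+: (1::w) then wt (1::w) else 0) = 0 from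
    Finset.sum_eq_zero (fun w _ => by rw [if_neg]; simp [List.cons_prefix_cons])]
  rw [zero_add]
  apply Finset.sum_congr rfl; intro w _
  have hp : [2,2] <+: w → [2] <+: w := fun h => List.IsPrefix.trans ⟨[2], rfl⟩ h
  simp only [avoids_cons_two, wt_cons_two, List.cons_prefix_cons, true_and]
  by_cases hA : Avoids S w <;> by_cases h1 : [2] <+: w <;> by_cases h11 : [2,2] <+: w <;> first | exact absurd (hp h11) h1 | (simp [hA, h1, h11, mul_sub] <;> ring)


lemma vE0 : E 0 = 1 := by simp [E, L, avoids_iff, wt]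

lemma vQ0 (a : ℕ) (p : List ℕ) : Q (a :: p) 0 = 0 := by simp [Q, L]

lemma vE1 : E 1 = X1 + X2 := by
  have h : E 1 = X1 * (E 0 - Q [1,1] 0) + X2 * (E 0 - Q [2,2] 0) := stepE 0
  rw [h, vE0, vQ0, vQ0]; ring

lemma vQ1_1 : Q [1] 1 = X1 := by
  have h : Q [1] 1 = X1 * (E 0 - Q [1,1] 0) := stepQ1 0
  rw [h, vE0, vQ0]; ring

lemma vQ2_1 : Q [2] 1 = X2 := by
  have h : Q [2] 1 = X2 * (E 0 - Q [2,2] 0) := stepQ2 0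
  rw [h, vE0, vQ0]; ring

lemma vQ11_1 : Q [1,1] 1 = 0 := by
  have h : Q [1,1] 1 = X1 * (Q [1] 0 - Q [1,1] 0) := stepQ11 0
  rw [h, vQ0, vQ0]; ring

lemma vQ22_1 : Q [2,2] 1 = 0 := by
  have h : Q [2,2] 1 = X2 * (Q [2] 0 - Q [2,2] 0) := stepQ22 0
  rw [h, vQ0, vQ0]; ring

lemma vE2 : E 2 = X1^2 + 2*X1*X2 + X2^2 := by
  have h : E 2 = X1 * (E 1 - Q [1,1] 1) + X2 * (E 1 - Q [2,2] 1) := stepE 1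
  rw [h, vE1, vQ11_1, vQ22_1]; ring

lemma vQ1_2 : Q [1] 2 = X1*X2 + X1^2 := by
  have h : Q [1] 2 = X1 * (E 1 - Q [1,1] 1) := stepQ1 1
  rw [h, vE1, vQ11_1]; ring

lemma vQ2_2 : Q [2] 2 = X1*X2 + X2^2 := by
  have h : Q [2] 2 = X2 * (E 1 - Q [2,2] 1) := stepQ2 1
  rw [h, vE1, vQ22_1]; ring

lemma vQ11_2 : Q [1,1] 2 = X1^2 := by
  have h : Q [1,1] 2 = X1 * (Q [1] 1 - Q [1,1] 1) := stepQ11 1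
  rw [h, vQ1_1, vQ11_1]; ring

lemma vQ22_2 : Q [2,2] 2 = X2^2 := by
  have h : Q [2,2] 2 = X2 * (Q [2] 1 - Q [2,2] 1) := stepQ22 1
  rw [h, vQ2_1, vQ22_1]; ring

lemma vE3 : E 3 = 3*X1*X2^2 + 3*X1^2*X2 := by
  have h : E 3 = X1 * (E 2 - Q [1,1] 2) + X2 * (E 2 - Q [2,2] 2) := stepE 2
  rw [h, vE2, vQ11_2, vQ22_2]; ring

lemma vQ11_3 : Q [1,1] 3 = X1^2*X2 := by
  have h : Q [1,1] 3 = X1 * (Q [1] 2 - Q [1,1] 2) := stepQ11 2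
  rw [h, vQ1_2, vQ11_2]; ring

lemma vQ22_3 : Q [2,2] 3 = X1*X2^2 := by
  have h : Q [2,2] 3 = X2 * (Q [2] 2 - Q [2,2] 2) := stepQ22 2
  rw [h, vQ2_2, vQ22_2]; ring

lemma vE4 : E 4 = 2*X1*X2^3 + 6*X1^2*X2^2 + 2*X1^3*X2 := by
  have h : E 4 = X1 * (E 3 - Q [1,1] 3) + X2 * (E 3 - Q [2,2] 3) := stepE 3
  rw [h, vE3, vQ11_3, vQ22_3]; ring

lemma main_rec (k : ℕ) :
    E (k+5) = X1*X2 * E (k+3) + (X1^2*X2 + X1*X2^2) * E (k+2) + X1^2*X2^2 * E (k+1) := by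
  have hcon : E (k+1) = Q [1] (k+1) + Q [2] (k+1) := by
    linear_combination stepE k - stepQ1 k - stepQ2 k
  have h5 : E (k+5) = X1 * (E (k+4) - Q [1,1] (k+4)) + X2 * (E (k+4) - Q [2,2] (k+4)) := stepE (k+4)
  have hE4 : E (k+4) = X1 * (E (k+3) - Q [1,1] (k+3)) + X2 * (E (k+3) - Q [2,2] (k+3)) := stepE (k+3)
  have hQ11_4 : Q [1,1] (k+4) = X1 * (Q [1] (k+3) - Q [1,1] (k+3)) := stepQ11 (k+3)
  have hQ22_4 : Q [2,2] (k+4) = X2 * (Q [2] (k+3) - Q [2,2] (k+3)) := stepQ22 (k+3)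
  have hE3 : E (k+3) = X1 * (E (k+2) - Q [1,1] (k+2)) + X2 * (E (k+2) - Q [2,2] (k+2)) := stepE (k+2)
  have hQ1_3 : Q [1] (k+3) = X1 * (E (k+2) - Q [1,1] (k+2)) := stepQ1 (k+2)
  have hQ2_3 : Q [2] (k+3) = X2 * (E (k+2) - Q [2,2] (k+2)) := stepQ2 (k+2)
  have hQ11_3 : Q [1,1] (k+3) = X1 * (Q [1] (k+2) - Q [1,1] (k+2)) := stepQ11 (k+2)
  have hQ22_3 : Q [2,2] (k+3) = X2 * (Q [2] (k+2) - Q [2,2] (k+2)) := stepQ22 (k+2)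
  have hE2 : E (k+2) = X1 * (E (k+1) - Q [1,1] (k+1)) + X2 * (E (k+1) - Q [2,2] (k+1)) := stepE (k+1)
  have hQ1_2 : Q [1] (k+2) = X1 * (E (k+1) - Q [1,1] (k+1)) := stepQ1 (k+1)
  have hQ2_2 : Q [2] (k+2) = X2 * (E (k+1) - Q [2,2] (k+1)) := stepQ2 (k+1)
  have hQ11_2 : Q [1,1] (k+2) = X1 * (Q [1] (k+1) - Q [1,1] (k+1)) := stepQ11 (k+1)
  have hQ22_2 : Q [2,2] (k+2) = X2 * (Q [2] (k+1) - Q [2,2] (k+1)) := stepQ22 (k+1)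
  rw [h5, hE4, hQ11_4, hQ22_4, hE3, hQ1_3, hQ2_3, hQ11_3, hQ22_3, hE2, hQ1_2, hQ2_2,
    hQ11_2, hQ22_2]
  linear_combination (X1^2*X2^2) * hcon

lemma sum_fun_eq : ∀ (n : ℕ) (G : List ℕ → R),
    (∑ f : Fin n → Fin 2, G (List.ofFn fun j => ((f j : ℕ) + 1))) = ∑ w ∈ L n, G w := by
  intro n
  induction n with
  | zero => intro G; simp [L]
  | succ n ih =>
    intro G
    rw [← Equiv.sum_comp (Fin.consEquiv (fun _ : Fin (n+1) => Fin 2))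
        (fun f : Fin (n+1) → Fin 2 => G (List.ofFn fun j => ((f j : ℕ) + 1)))]
    rw [Fintype.sum_prod_type, Fin.sum_univ_two]
    have h0 : ∀ f : Fin n → Fin 2,
        (List.ofFn fun j : Fin (n+1) => (((Fin.consEquiv (fun _ : Fin (n+1) => Fin 2)) ((0 : Fin 2), f) j : ℕ) + 1))
          = 1 :: List.ofFn fun j => ((f j : ℕ) + 1) := by
      intro f; rw [List.ofFn_succ]; simp [Fin.consEquiv]
    have h1 : ∀ f : Fin n → Fin 2,
        (List.ofFn fun j : Fin (n+1) => (((Fin.consEquiv (fun _ : Fin (n+1) => Fin 2)) ((1 : Fin 2), f) j : ℕ) + 1))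
          = 2 :: List.ofFn fun j => ((f j : ℕ) + 1) := by
      intro f; rw [List.ofFn_succ]; simp [Fin.consEquiv]
    simp only [h0, h1]
    rw [ih (fun w => G (1 :: w)), ih (fun w => G (2 :: w)), ← sum_L_succ]

lemma coeff_mk_mul_CX (c : R) (k n : ℕ) :
    (PowerSeries.coeff n) ((PowerSeries.mk E) * (PowerSeries.C c * PowerSeries.X ^ k))
      = if k ≤ n then c * E (n - k) else 0 := by
  rw [show (PowerSeries.mk E) * (PowerSeries.C c * PowerSeries.X ^ k)
      = ((PowerSeries.mk E) * PowerSeries.C c) * PowerSeries.X ^ k by ring,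
    PowerSeries.coeff_mul_X_pow']
  split_ifs with h
  · rw [PowerSeries.coeff_mul_C, PowerSeries.coeff_mk]; ring
  · rfl

lemma final :
    (PowerSeries.mk fun n => E n) *
      (1 - PowerSeries.C (X1 ^ 2 * X2 ^ 2) * PowerSeries.X ^ 4
        - PowerSeries.C (X1 ^ 2 * X2) * PowerSeries.X ^ 3
        - PowerSeries.C (X1 * X2 ^ 2) * PowerSeries.X ^ 3
        - PowerSeries.C (X1 * X2) * PowerSeries.X ^ 2) =
    (PowerSeries.C (X1 ^ 2) * PowerSeries.X ^ 2 + PowerSeries.C X1 * PowerSeries.X + 1) *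
    (PowerSeries.C (X2 ^ 2) * PowerSeries.X ^ 2 + PowerSeries.C X2 * PowerSeries.X + 1) := by
  have hR : (PowerSeries.C (X1 ^ 2) * PowerSeries.X ^ 2 + PowerSeries.C X1 * PowerSeries.X + 1) *
      (PowerSeries.C (X2 ^ 2) * PowerSeries.X ^ 2 + PowerSeries.C X2 * PowerSeries.X + 1)
      = PowerSeries.C (X1^2*X2^2) * PowerSeries.X ^ 4
        + PowerSeries.C (X1^2*X2) * PowerSeries.X ^ 3
        + PowerSeries.C (X1*X2^2) * PowerSeries.X ^ 3
        + PowerSeries.C (X1^2) * PowerSeries.X ^ 2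
        + PowerSeries.C (X1*X2) * PowerSeries.X ^ 2
        + PowerSeries.C (X2^2) * PowerSeries.X ^ 2
        + PowerSeries.C X1 * PowerSeries.X ^ 1
        + PowerSeries.C X2 * PowerSeries.X ^ 1 + 1 := by
    simp only [map_add, map_mul]; ring
  have hL : (PowerSeries.mk fun n => E n) *
      (1 - PowerSeries.C (X1 ^ 2 * X2 ^ 2) * PowerSeries.X ^ 4
        - PowerSeries.C (X1 ^ 2 * X2) * PowerSeries.X ^ 3
        - PowerSeries.C (X1 * X2 ^ 2) * PowerSeries.X ^ 3
        - PowerSeries.C (X1 * X2) * PowerSeries.X ^ 2)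
      = (PowerSeries.mk fun n => E n)
        - (PowerSeries.mk fun n => E n) * (PowerSeries.C (X1 ^ 2 * X2 ^ 2) * PowerSeries.X ^ 4)
        - (PowerSeries.mk fun n => E n) * (PowerSeries.C (X1 ^ 2 * X2) * PowerSeries.X ^ 3)
        - (PowerSeries.mk fun n => E n) * (PowerSeries.C (X1 * X2 ^ 2) * PowerSeries.X ^ 3)
        - (PowerSeries.mk fun n => E n) * (PowerSeries.C (X1 * X2) * PowerSeries.X ^ 2) := by
    ring
  apply PowerSeries.ext
  intro n
  rw [hL, hR]
  simp only [map_sub, map_add, coeff_mk_mul_CX, PowerSeries.coeff_mk,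
    PowerSeries.coeff_C_mul_X_pow, PowerSeries.coeff_one]
  obtain _|_|_|_|_|m := n
  · norm_num [vE0]
  · norm_num [vE1]
  · norm_num [vE2, vE0]; ring
  · norm_num [vE3, vE1, vE0]; ring
  · norm_num [vE4, vE2, vE1, vE0]; ring
  · rw [show m + 1 + 1 + 1 + 1 + 1 = m + 5 from rfl]
    rw [if_pos (by omega : 4 ≤ m+5), if_pos (by omega : 3 ≤ m+5), if_pos (by omega : 3 ≤ m+5),
      if_pos (by omega : 2 ≤ m+5)]
    simp only [if_neg (by omega : ¬ (m+5 = 4)), if_neg (by omega : ¬ (m+5 = 3)),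
      if_neg (by omega : ¬ (m+5 = 2)), if_neg (by omega : ¬ (m+5 = 1)), if_neg (by omega : ¬ (m+5 = 0))]
    have e1 : m + 5 - 4 = m + 1 := by omega
    have e2 : m + 5 - 3 = m + 2 := by omega
    have e3 : m + 5 - 2 = m + 3 := by omega
    rw [e1, e2, e3]
    linear_combination main_rec m

end
end GJaux


theorem goulden_jackson_111_222 :
    letI x₁ : MvPolynomial (Fin 2) ℚ := MvPolynomial.X 0
    letI x₂ : MvPolynomial (Fin 2) ℚ := MvPolynomial.X 1
    letI F : PowerSeries (MvPolynomial (Fin 2) ℚ) :=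
      PowerSeries.mk (fun n =>
        ∑ f : Fin n → Fin 2,
          if Avoids {[1, 1, 1], [2, 2, 2]} (List.ofFn fun j => (f j : ℕ) + 1) then
            x₁ ^ ((List.ofFn fun j => (f j : ℕ) + 1).count 1) *
            x₂ ^ ((List.ofFn fun j => (f j : ℕ) + 1).count 2)
          else 0)
    F * (1 - PowerSeries.C (x₁ ^ 2 * x₂ ^ 2) * (PowerSeries.X : PowerSeries (MvPolynomial (Fin 2) ℚ)) ^ 4
          - PowerSeries.C (x₁ ^ 2 * x₂) * PowerSeries.X ^ 3
          - PowerSeries.C (x₁ * x₂ ^ 2) * PowerSeries.X ^ 3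
          - PowerSeries.C (x₁ * x₂) * PowerSeries.X ^ 2) =
      (PowerSeries.C (x₁ ^ 2) * PowerSeries.X ^ 2 + PowerSeries.C x₁ * PowerSeries.X + 1) *
      (PowerSeries.C (x₂ ^ 2) * PowerSeries.X ^ 2 + PowerSeries.C x₂ * PowerSeries.X + 1) := by
  have hmk : (PowerSeries.mk (fun n =>
      ∑ f : Fin n → Fin 2,
        if Avoids {[1, 1, 1], [2, 2, 2]} (List.ofFn fun j => (f j : ℕ) + 1) then
          (MvPolynomial.X 0 : MvPolynomial (Fin 2) ℚ) ^ ((List.ofFn fun j => (f j : ℕ) + 1).count 1) *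
          (MvPolynomial.X 1 : MvPolynomial (Fin 2) ℚ) ^ ((List.ofFn fun j => (f j : ℕ) + 1).count 2)
        else 0) : PowerSeries (MvPolynomial (Fin 2) ℚ)) = PowerSeries.mk (fun n => GJaux.E n) := by
    apply PowerSeries.ext
    intro n
    rw [PowerSeries.coeff_mk, PowerSeries.coeff_mk]
    exact GJaux.sum_fun_eq n (fun w => if Avoids GJaux.S w then GJaux.wt w else 0)
  rw [hmk]
  exact GJaux.final
end

section
/- If the limiting frequency freq_1(K) of 1 in the Kolakoski word exists, then |freq_1(K) − 1/2| ≤ 1/18. -/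
set_option maxHeartbeats 1000000 in
set_option synthInstance.maxHeartbeats 1000000 in
set_option synthInstance.maxSize 2000 in
private lemma bool_window (b0 b1 b2 b3 b4 b5 b6 b7 b8 : Bool) :
    (b0 = b1 ∧ b1 = b2) ∨ (b1 = b2 ∧ b2 = b3) ∨
    (b2 = b3 ∧ b3 = b4) ∨ (b3 = b4 ∧ b4 = b5) ∨
    (b4 = b5 ∧ b5 = b6) ∨ (b5 = b6 ∧ b6 = b7) ∨
    (b6 = b7 ∧ b7 = b8) ∨
    (b0 ≠ b1 ∧ b1 ≠ b2 ∧ b2 ≠ b3 ∧ b3 ≠ b4) ∨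
    (b1 ≠ b2 ∧ b2 ≠ b3 ∧ b3 ≠ b4 ∧ b4 ≠ b5) ∨
    (b2 ≠ b3 ∧ b3 ≠ b4 ∧ b4 ≠ b5 ∧ b5 ≠ b6) ∨
    (b3 ≠ b4 ∧ b4 ≠ b5 ∧ b5 ≠ b6 ∧ b6 ≠ b7) ∨
    (b4 ≠ b5 ∧ b5 ≠ b6 ∧ b6 ≠ b7 ∧ b7 ≠ b8) ∨
    (b0 = b1 ∧ b1 ≠ b2 ∧ b2 = b3 ∧ b3 ≠ b4 ∧ b4 = b5) ∨
    (b1 = b2 ∧ b2 ≠ b3 ∧ b3 = b4 ∧ b4 ≠ b5 ∧ b5 = b6) ∨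
    (b2 = b3 ∧ b3 ≠ b4 ∧ b4 = b5 ∧ b5 ≠ b6 ∧ b6 = b7) ∨
    (b3 = b4 ∧ b4 ≠ b5 ∧ b5 = b6 ∧ b6 ≠ b7 ∧ b7 = b8) ∨
    (b0 = b1 ∧ b1 ≠ b2 ∧ b2 ≠ b3 ∧ b3 = b4 ∧ b4 ≠ b5 ∧ b5 ≠ b6 ∧ b6 = b7) ∨
    (b1 = b2 ∧ b2 ≠ b3 ∧ b3 ≠ b4 ∧ b4 = b5 ∧ b5 ≠ b6 ∧ b6 ≠ b7 ∧ b7 = b8) ∨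
    (b0 ≠ b1 ∧ b1 ≠ b2 ∧ b2 = b3 ∧ b3 ≠ b4 ∧ b4 ≠ b5 ∧ b5 = b6 ∧ b6 ≠ b7 ∧ b7 ≠ b8) ∨
    (4 ≤ (cond b0 1 0 : ℕ) + cond b1 1 0 + cond b2 1 0 + cond b3 1 0 + cond b4 1 0
        + cond b5 1 0 + cond b6 1 0 + cond b7 1 0 + cond b8 1 0 ∧
    (cond b0 1 0 : ℕ) + cond b1 1 0 + cond b2 1 0 + cond b3 1 0 + cond b4 1 0
        + cond b5 1 0 + cond b6 1 0 + cond b7 1 0 + cond b8 1 0 ≤ 5) := by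
  revert b0 b1 b2 b3 b4 b5 b6 b7 b8
  decide

theorem kolakoski_freq_bound_one_eighteenth (K : ℕ → ℕ) (hK : IsKolakoski K)
    (L : ℝ)
    (hlim : Filter.Tendsto (fun m : ℕ => (onesCount K m : ℝ) / m)
      Filter.atTop (nhds L)) :
    |L - 1 / 2| ≤ 1 / 18 := by
  obtain ⟨hval, h0, r, hr0, hmono, hconst, halt, hlen⟩ := hK
  have hstep : ∀ k, r k < r (k+1) := fun k => hmono (Nat.lt_succ_self k)
  have hlen2 : ∀ k, r (k+1) ≤ r k + 2 := by
    intro k; have h1 := hlen k; have h2 := hval k; have := hstep k; omega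
  -- every position lies in some run
  have hmem : ∀ i, ∃ k, r k ≤ i ∧ i < r (k+1) := by
    intro i
    induction i with
    | zero => exact ⟨0, by omega, by have := hstep 0; omega⟩
    | succ i ih =>
      obtain ⟨k, h1, h2⟩ := ih
      by_cases h : i + 1 < r (k+1)
      · exact ⟨k, by omega, h⟩
      · exact ⟨k+1, by omega, by have := hstep (k+1); omega⟩
  have hstep' : ∀ k k', k' = k + 1 → r k < r k' := fun k k' h => h ▸ hstep k
  have hlen' : ∀ k k', k' = k + 1 → r k' - r k = K k := fun k k' h => h ▸ hlen k
  have hlen2' : ∀ k k', k' = k + 1 → r k' ≤ r k + 2 := fun k k' h => h ▸ hlen2 k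
  -- same value at consecutive positions: same run
  have hsame : ∀ k k' i j, k' = k + 1 → r k ≤ i → i < r k' → j = i + 1 → K i = K j →
      j < r k' := by
    intro k k' i j hk h1 h2 hj he; subst hk; subst hj
    by_contra h
    have hb : i + 1 = r (k+1) := by omega
    exact halt k (by rw [← hconst k i h1 h2, he, hb])
  -- different value at consecutive positions: run boundary
  have hdiff : ∀ k k' i j, k' = k + 1 → r k ≤ i → i < r k' → j = i + 1 → K i ≠ K j →
      j = r k' := by
    intro k k' i j hk h1 h2 hj hne; subst hk; subst hj
    by_contra h
    have hlt : i + 1 < r (k+1) := by omega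
    exact hne (by rw [hconst k i h1 h2, hconst k (i+1) (by omega) hlt])
  -- Fact A : no xxx
  have factA : ∀ a b c, b = a + 1 → c = a + 2 →
      ¬(K a = K b ∧ K b = K c) := by
    rintro a b c hb hc ⟨h1, h2⟩; subst hb; subst hc
    obtain ⟨k, hk1, hk2⟩ := hmem a
    have p1 := hsame k (k+1) a (a+1) rfl hk1 hk2 rfl h1
    have p2 := hsame k (k+1) (a+1) (a+2) rfl (by omega) p1 (by omega) h2
    have := hlen2 k; omega
  -- Fact B : no xyxyx
  have factB : ∀ a b c d e, b = a+1 → c = a+2 → d = a+3 → e = a+4 →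
      ¬(K a ≠ K b ∧ K b ≠ K c ∧ K c ≠ K d ∧ K d ≠ K e) := by
    rintro a b c d e hb hc hd he ⟨h1, h2, h3, h4⟩
    subst hb; subst hc; subst hd; subst he
    obtain ⟨k, hk1, hk2⟩ := hmem a
    have e1 : a+1 = r (k+1) := hdiff k (k+1) a (a+1) rfl hk1 hk2 rfl h1
    have e2 : a+2 = r (k+2) :=
      hdiff (k+1) (k+2) (a+1) (a+2) rfl (by omega)
        (by have := hstep' (k+1) (k+2) rfl; omega) (by omega) h2
    have e3 : a+3 = r (k+3) :=
      hdiff (k+2) (k+3) (a+2) (a+3) rfl (by omega)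
        (by have := hstep' (k+2) (k+3) rfl; omega) (by omega) h3
    have e4 : a+4 = r (k+4) :=
      hdiff (k+3) (k+4) (a+3) (a+4) rfl (by omega)
        (by have := hstep' (k+3) (k+4) rfl; omega) (by omega) h4
    have q1 : K (k+1) = 1 := by have := hlen' (k+1) (k+2) rfl; omega
    have q2 : K (k+2) = 1 := by have := hlen' (k+2) (k+3) rfl; omega
    have q3 : K (k+3) = 1 := by have := hlen' (k+3) (k+4) rfl; omega
    exact factA (k+1) (k+2) (k+3) (by omega) (by omega) ⟨by omega, by omega⟩
  -- Fact C : no xxyyxx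
  have factC : ∀ a b c d e f, b = a+1 → c = a+2 → d = a+3 → e = a+4 → f = a+5 →
      ¬(K a = K b ∧ K b ≠ K c ∧ K c = K d ∧ K d ≠ K e ∧ K e = K f) := by
    rintro a b c d e f hb hc hd he hf ⟨h1, h2, h3, h4, h5⟩
    subst hb; subst hc; subst hd; subst he; subst hf
    obtain ⟨k, hk1, hk2⟩ := hmem a
    have p1 := hsame k (k+1) a (a+1) rfl hk1 hk2 rfl h1
    have e1 : a+2 = r (k+1) := hdiff k (k+1) (a+1) (a+2) rfl (by omega) p1 (by omega) h2
    have q0 : K k = 2 := by have := hlen k; have := hval k; omega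
    have p2 := hsame (k+1) (k+2) (a+2) (a+3) rfl (by omega)
      (by have := hstep' (k+1) (k+2) rfl; omega) (by omega) h3
    have e2 : a+4 = r (k+2) :=
      hdiff (k+1) (k+2) (a+3) (a+4) rfl (by omega) p2 (by omega) h4
    have q1 : K (k+1) = 2 := by have := hlen' (k+1) (k+2) rfl; omega
    have p3 := hsame (k+2) (k+3) (a+4) (a+5) rfl (by omega)
      (by have := hstep' (k+2) (k+3) rfl; omega) (by omega) h5
    have q2 : K (k+2) = 2 := by
      have := hlen' (k+2) (k+3) rfl; have := hval (k+2)
      have := hlen2' (k+2) (k+3) rfl; omega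
    exact factA k (k+1) (k+2) (by omega) (by omega) ⟨by omega, by omega⟩
  -- Fact D : no xxyxxyxx
  have factD : ∀ a, ¬(K a = K (a+1) ∧ K (a+1) ≠ K (a+2) ∧ K (a+2) ≠ K (a+3) ∧
      K (a+3) = K (a+4) ∧ K (a+4) ≠ K (a+5) ∧ K (a+5) ≠ K (a+6) ∧ K (a+6) = K (a+7)) := by
    rintro a ⟨h1, h2, h3, h4, h5, h6, h7⟩
    obtain ⟨k, hk1, hk2⟩ := hmem a
    have p1 := hsame k (k+1) a (a+1) rfl hk1 hk2 rfl h1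
    have e1 : a+2 = r (k+1) := hdiff k (k+1) (a+1) (a+2) rfl (by omega) p1 (by omega) h2
    have q0 : K k = 2 := by have := hlen k; have := hval k; omega
    have e2 : a+3 = r (k+2) :=
      hdiff (k+1) (k+2) (a+2) (a+3) rfl (by omega)
        (by have := hstep' (k+1) (k+2) rfl; omega) (by omega) h3
    have q1 : K (k+1) = 1 := by have := hlen' (k+1) (k+2) rfl; omega
    have p2 := hsame (k+2) (k+3) (a+3) (a+4) rfl (by omega)
      (by have := hstep' (k+2) (k+3) rfl; omega) (by omega) h4
    have e3 : a+5 = r (k+3) :=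
      hdiff (k+2) (k+3) (a+4) (a+5) rfl (by omega) p2 (by omega) h5
    have q2 : K (k+2) = 2 := by have := hlen' (k+2) (k+3) rfl; omega
    have e4 : a+6 = r (k+4) :=
      hdiff (k+3) (k+4) (a+5) (a+6) rfl (by omega)
        (by have := hstep' (k+3) (k+4) rfl; omega) (by omega) h6
    have q3 : K (k+3) = 1 := by have := hlen' (k+3) (k+4) rfl; omega
    have p3 := hsame (k+4) (k+5) (a+6) (a+7) rfl (by omega)
      (by have := hstep' (k+4) (k+5) rfl; omega) (by omega) h7
    have q4 : K (k+4) = 2 := by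
      have := hlen' (k+4) (k+5) rfl; have := hval (k+4)
      have := hlen2' (k+4) (k+5) rfl; omega
    exact factB k (k+1) (k+2) (k+3) (k+4) (by omega) (by omega) (by omega) (by omega)
      ⟨by omega, by omega, by omega, by omega⟩
  -- Fact E : no xyxxyxxyx
  have factE : ∀ a, ¬(K a ≠ K (a+1) ∧ K (a+1) ≠ K (a+2) ∧ K (a+2) = K (a+3) ∧
      K (a+3) ≠ K (a+4) ∧ K (a+4) ≠ K (a+5) ∧ K (a+5) = K (a+6) ∧
      K (a+6) ≠ K (a+7) ∧ K (a+7) ≠ K (a+8)) := by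
    rintro a ⟨h1, h2, h3, h4, h5, h6, h7, h8⟩
    obtain ⟨k, hk1, hk2⟩ := hmem a
    have e1 : a+1 = r (k+1) := hdiff k (k+1) a (a+1) rfl hk1 hk2 rfl h1
    have e2 : a+2 = r (k+2) :=
      hdiff (k+1) (k+2) (a+1) (a+2) rfl (by omega)
        (by have := hstep' (k+1) (k+2) rfl; omega) (by omega) h2
    have q1 : K (k+1) = 1 := by have := hlen' (k+1) (k+2) rfl; omega
    have p1 := hsame (k+2) (k+3) (a+2) (a+3) rfl (by omega)
      (by have := hstep' (k+2) (k+3) rfl; omega) (by omega) h3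
    have e3 : a+4 = r (k+3) :=
      hdiff (k+2) (k+3) (a+3) (a+4) rfl (by omega) p1 (by omega) h4
    have q2 : K (k+2) = 2 := by have := hlen' (k+2) (k+3) rfl; omega
    have e4 : a+5 = r (k+4) :=
      hdiff (k+3) (k+4) (a+4) (a+5) rfl (by omega)
        (by have := hstep' (k+3) (k+4) rfl; omega) (by omega) h5
    have q3 : K (k+3) = 1 := by have := hlen' (k+3) (k+4) rfl; omega
    have p2 := hsame (k+4) (k+5) (a+5) (a+6) rfl (by omega)
      (by have := hstep' (k+4) (k+5) rfl; omega) (by omega) h6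
    have e5 : a+7 = r (k+5) :=
      hdiff (k+4) (k+5) (a+6) (a+7) rfl (by omega) p2 (by omega) h7
    have q4 : K (k+4) = 2 := by have := hlen' (k+4) (k+5) rfl; omega
    have e6 : a+8 = r (k+6) :=
      hdiff (k+5) (k+6) (a+7) (a+8) rfl (by omega)
        (by have := hstep' (k+5) (k+6) rfl; omega) (by omega) h8
    have q5 : K (k+5) = 1 := by have := hlen' (k+5) (k+6) rfl; omega
    exact factB (k+1) (k+2) (k+3) (k+4) (k+5) (by omega) (by omega) (by omega) (by omega)
      ⟨by omega, by omega, by omega, by omega⟩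
  -- translation to booleans
  have hb : ∀ x y : ℕ, decide (K x = 1) = decide (K y = 1) ↔ K x = K y := by
    intro x y; rcases hval x with h | h <;> rcases hval y with h' | h' <;> simp [h, h']
  have hbe : ∀ x y, decide (K x = 1) = decide (K y = 1) → K x = K y :=
    fun x y h => (hb x y).mp h
  have hbne : ∀ x y, decide (K x = 1) ≠ decide (K y = 1) → K x ≠ K y :=
    fun x y h e => h ((hb x y).mpr e)
  -- window count
  have hwin : ∀ i, 4 ≤ (if K i = 1 then 1 else 0) + (if K (i+1) = 1 then 1 else 0)
      + (if K (i+2) = 1 then 1 else 0) + (if K (i+3) = 1 then 1 else 0)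
      + (if K (i+4) = 1 then 1 else 0) + (if K (i+5) = 1 then 1 else 0)
      + (if K (i+6) = 1 then 1 else 0) + (if K (i+7) = 1 then 1 else 0)
      + (if K (i+8) = 1 then 1 else 0) ∧
      (if K i = 1 then 1 else 0) + (if K (i+1) = 1 then 1 else 0)
      + (if K (i+2) = 1 then 1 else 0) + (if K (i+3) = 1 then 1 else 0)
      + (if K (i+4) = 1 then 1 else 0) + (if K (i+5) = 1 then 1 else 0)
      + (if K (i+6) = 1 then 1 else 0) + (if K (i+7) = 1 then 1 else 0)
      + (if K (i+8) = 1 then (1:ℕ) else 0) ≤ 5 := by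
    intro i
    have W := bool_window (decide (K i = 1)) (decide (K (i+1) = 1)) (decide (K (i+2) = 1))
      (decide (K (i+3) = 1)) (decide (K (i+4) = 1)) (decide (K (i+5) = 1))
      (decide (K (i+6) = 1)) (decide (K (i+7) = 1)) (decide (K (i+8) = 1))
    rcases W with h|h|h|h|h|h|h|h|h|h|h|h|h|h|h|h|h|h|h|h
    · exact absurd ⟨hbe _ _ h.1, hbe _ _ h.2⟩ (factA i (i+1) (i+2) (by omega) (by omega))
    · exact absurd ⟨hbe _ _ h.1, hbe _ _ h.2⟩
        (factA (i+1) (i+2) (i+3) (by omega) (by omega))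
    · exact absurd ⟨hbe _ _ h.1, hbe _ _ h.2⟩
        (factA (i+2) (i+3) (i+4) (by omega) (by omega))
    · exact absurd ⟨hbe _ _ h.1, hbe _ _ h.2⟩
        (factA (i+3) (i+4) (i+5) (by omega) (by omega))
    · exact absurd ⟨hbe _ _ h.1, hbe _ _ h.2⟩
        (factA (i+4) (i+5) (i+6) (by omega) (by omega))
    · exact absurd ⟨hbe _ _ h.1, hbe _ _ h.2⟩
        (factA (i+5) (i+6) (i+7) (by omega) (by omega))
    · exact absurd ⟨hbe _ _ h.1, hbe _ _ h.2⟩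
        (factA (i+6) (i+7) (i+8) (by omega) (by omega))
    · exact absurd ⟨hbne _ _ h.1, hbne _ _ h.2.1, hbne _ _ h.2.2.1, hbne _ _ h.2.2.2⟩
        (factB i (i+1) (i+2) (i+3) (i+4) (by omega) (by omega) (by omega) (by omega))
    · exact absurd ⟨hbne _ _ h.1, hbne _ _ h.2.1, hbne _ _ h.2.2.1, hbne _ _ h.2.2.2⟩
        (factB (i+1) (i+2) (i+3) (i+4) (i+5) (by omega) (by omega) (by omega) (by omega))
    · exact absurd ⟨hbne _ _ h.1, hbne _ _ h.2.1, hbne _ _ h.2.2.1, hbne _ _ h.2.2.2⟩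
        (factB (i+2) (i+3) (i+4) (i+5) (i+6) (by omega) (by omega) (by omega) (by omega))
    · exact absurd ⟨hbne _ _ h.1, hbne _ _ h.2.1, hbne _ _ h.2.2.1, hbne _ _ h.2.2.2⟩
        (factB (i+3) (i+4) (i+5) (i+6) (i+7) (by omega) (by omega) (by omega) (by omega))
    · exact absurd ⟨hbne _ _ h.1, hbne _ _ h.2.1, hbne _ _ h.2.2.1, hbne _ _ h.2.2.2⟩
        (factB (i+4) (i+5) (i+6) (i+7) (i+8) (by omega) (by omega) (by omega) (by omega))
    · exact absurd ⟨hbe _ _ h.1, hbne _ _ h.2.1, hbe _ _ h.2.2.1, hbne _ _ h.2.2.2.1,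
        hbe _ _ h.2.2.2.2⟩
        (factC i (i+1) (i+2) (i+3) (i+4) (i+5) (by omega) (by omega) (by omega) (by omega)
          (by omega))
    · exact absurd ⟨hbe _ _ h.1, hbne _ _ h.2.1, hbe _ _ h.2.2.1, hbne _ _ h.2.2.2.1,
        hbe _ _ h.2.2.2.2⟩
        (factC (i+1) (i+2) (i+3) (i+4) (i+5) (i+6) (by omega) (by omega) (by omega)
          (by omega) (by omega))
    · exact absurd ⟨hbe _ _ h.1, hbne _ _ h.2.1, hbe _ _ h.2.2.1, hbne _ _ h.2.2.2.1,
        hbe _ _ h.2.2.2.2⟩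
        (factC (i+2) (i+3) (i+4) (i+5) (i+6) (i+7) (by omega) (by omega) (by omega)
          (by omega) (by omega))
    · exact absurd ⟨hbe _ _ h.1, hbne _ _ h.2.1, hbe _ _ h.2.2.1, hbne _ _ h.2.2.2.1,
        hbe _ _ h.2.2.2.2⟩
        (factC (i+3) (i+4) (i+5) (i+6) (i+7) (i+8) (by omega) (by omega) (by omega)
          (by omega) (by omega))
    · refine absurd ?_ (factD i)
      refine ⟨hbe _ _ h.1, hbne _ _ h.2.1, hbne _ _ h.2.2.1, hbe _ _ h.2.2.2.1,
        hbne _ _ h.2.2.2.2.1, hbne _ _ h.2.2.2.2.2.1, hbe _ _ h.2.2.2.2.2.2⟩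
    · -- factD at i+1 : indices i+1, i+2, ..., i+8 versus (i+1)+1 etc.
      have hD := factD (i+1)
      refine absurd ?_ hD
      have n2 : i+1+1 = i+2 := by omega
      have n3 : i+1+2 = i+3 := by omega
      have n4 : i+1+3 = i+4 := by omega
      have n5 : i+1+4 = i+5 := by omega
      have n6 : i+1+5 = i+6 := by omega
      have n7 : i+1+6 = i+7 := by omega
      have n8 : i+1+7 = i+8 := by omega
      rw [n2, n3, n4, n5, n6, n7, n8]
      exact ⟨hbe _ _ h.1, hbne _ _ h.2.1, hbne _ _ h.2.2.1, hbe _ _ h.2.2.2.1,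
        hbne _ _ h.2.2.2.2.1, hbne _ _ h.2.2.2.2.2.1, hbe _ _ h.2.2.2.2.2.2⟩
    · refine absurd ?_ (factE i)
      exact ⟨hbne _ _ h.1, hbne _ _ h.2.1, hbe _ _ h.2.2.1, hbne _ _ h.2.2.2.1,
        hbne _ _ h.2.2.2.2.1, hbe _ _ h.2.2.2.2.2.1, hbne _ _ h.2.2.2.2.2.2.1,
        hbne _ _ h.2.2.2.2.2.2.2⟩
    · simpa only [Bool.cond_decide] using h
  -- counting step
  have honestep : ∀ m n, n = m + 1 →
      onesCount K n = onesCount K m + (if K m = 1 then 1 else 0) := by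
    intro m n hn; subst hn
    by_cases h : K m = 1
    · simp [onesCount, Finset.range_add_one, Finset.filter_insert, h,
        Finset.card_insert_of_notMem]
    · simp [onesCount, Finset.range_add_one, Finset.filter_insert, h]
  have hchunk : ∀ i, onesCount K i + 4 ≤ onesCount K (i+9) ∧
      onesCount K (i+9) ≤ onesCount K i + 5 := by
    intro i
    have e1 := honestep i (i+1) (by omega)
    have e2 := honestep (i+1) (i+2) (by omega)
    have e3 := honestep (i+2) (i+3) (by omega)
    have e4 := honestep (i+3) (i+4) (by omega)
    have e5 := honestep (i+4) (i+5) (by omega)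
    have e6 := honestep (i+5) (i+6) (by omega)
    have e7 := honestep (i+6) (i+7) (by omega)
    have e8 := honestep (i+7) (i+8) (by omega)
    have e9 := honestep (i+8) (i+9) (by omega)
    have w := hwin i
    omega
  have hbounds : ∀ n : ℕ, 4 * n ≤ onesCount K (9 * n) ∧ onesCount K (9 * n) ≤ 5 * n := by
    intro n
    induction n with
    | zero => simp [onesCount]
    | succ n ih =>
      have h := hchunk (9 * n)
      have e : 9 * (n + 1) = 9 * n + 9 := by ring
      rw [e]; omega
  -- limit argument
  have h9 : Filter.Tendsto (fun n : ℕ => 9 * n) Filter.atTop Filter.atTop :=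
    Filter.tendsto_atTop_atTop.mpr (fun b => ⟨b, fun a ha => by omega⟩)
  have hsub := hlim.comp h9
  have hL1 : (4 / 9 : ℝ) ≤ L := by
    refine ge_of_tendsto hsub ?_
    filter_upwards [Filter.eventually_ge_atTop 1] with n hn
    show (4 / 9 : ℝ) ≤ (onesCount K (9 * n) : ℝ) / ((9 * n : ℕ) : ℝ)
    have hb := (hbounds n).1
    have hpos : (0 : ℝ) < ((9 * n : ℕ) : ℝ) := by
      have : 0 < 9 * n := by omega
      exact_mod_cast this
    rw [le_div_iff₀ hpos]
    have hc : (4 * n : ℝ) ≤ (onesCount K (9 * n) : ℝ) := by exact_mod_cast hb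
    push_cast
    push_cast at hc
    linarith
  have hL2 : L ≤ (5 / 9 : ℝ) := by
    refine le_of_tendsto hsub ?_
    filter_upwards [Filter.eventually_ge_atTop 1] with n hn
    show (onesCount K (9 * n) : ℝ) / ((9 * n : ℕ) : ℝ) ≤ (5 / 9 : ℝ)
    have hb := (hbounds n).2
    have hpos : (0 : ℝ) < ((9 * n : ℕ) : ℝ) := by
      have : 0 < 9 * n := by omega
      exact_mod_cast this
    rw [div_le_iff₀ hpos]
    have hc : (onesCount K (9 * n) : ℝ) ≤ (5 * n : ℝ) := by exact_mod_cast hb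
    push_cast
    push_cast at hc
    linarith
  rw [abs_le]
  constructor <;> linarith
end
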